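/- Let Θ, Θ̃ : [0,∞) → ℝ^N be two solutions of the inertial Kuramoto model for N identical oscillators with all-to-all coupling (parameters m, γ, κ > 0), with Σ_i θ_i(0) = Σ_i θ̃_i(0) = 0 and Σ_i ω_i(0) = Σ_i ω̃_i(0) = 0. Suppose γ > 1/2 and that there exists S ∈ (0, π) with D(Θ(t)) + D(Θ̃(t)) ≤ S for all t ≥ 0, and that the interval [κ/(2Γ̃), (2γ−1)/(2m)] is nonempty, where Γ̃ := sin(S)/S. Then the flow is uniformly stable in ℓ²: there exists a constant C > 0, independent of time, such that ‖Θ(t) − Θ̃(t)‖ + ‖Ω(t) − Ω̃(t)‖ ≤ C·( ‖Θ(0) − Θ̃(0)‖ + ‖Ω(0) − Ω̃(0)‖ ) for all t ≥ 0. -/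

import Mathlib

/-- The phase diameter of a configuration `Θ : Fin N → ℝ`:
`D(Θ) = max_{i,j} (Θ_i − Θ_j)`. -/
noncomputable def phaseDiam {N : ℕ} (Θ : Fin N → ℝ) : ℝ :=
  ⨆ p : Fin N × Fin N, (Θ p.1 - Θ p.2)

/-!
The differences `x = Θ − Θ̃`, `v = Ω − Ω̃` satisfy `m v' = −γ v + (κ/N) ∑ⱼ gᵢⱼ` with
`gᵢⱼ = sin (θⱼ − θᵢ) − sin (θ̃ⱼ − θ̃ᵢ)`. While `D(Θ) + D(Θ̃) ≤ S < π`, this coupling is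
antisymmetric, `1`-Lipschitz and lies in the sector `Γ̃ d² ≤ gᵢⱼ d`, `d = xⱼ − xᵢ`.
For such a coupling the quadratic energy
`E = γ²/(2m) ‖x‖² + γ ⟨x, v⟩ + m ‖v‖² = ‖γ x + m v‖² / (2m) + m ‖v‖² / 2`
is nonincreasing as soon as `κ m ≤ γ² Γ̃`, which the interval condition gives because
`2γ − 1 ≤ γ²`: the cross term makes the coupling enter through `γ x + 2 m v`, and its
`γ x` part is dissipative by the sector bound and absorbs the indefinite `v` part.
Since `E` is comparable to `‖x‖² + ‖v‖²`, the bound follows with a time-independent constant.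
-/

open Real Finset

lemma Real.sin_div_mul_le_sin {c x : ℝ} (hc : 0 < c) (hcπ : c ≤ π) (hx : 0 ≤ x)
    (hxc : x ≤ c) : sin c / c * x ≤ sin x := by
  have h := strictConcaveOn_sin_Icc.concaveOn.2 ⟨le_rfl, pi_pos.le⟩ ⟨hc.le, hcπ⟩
    (sub_nonneg.2 ((div_le_one hc).2 hxc)) (div_nonneg hx hc.le) (sub_add_cancel 1 (x / c))
  simp only [smul_eq_mul, mul_zero, sin_zero, zero_add, div_mul_cancel₀ x hc.ne'] at h
  calc sin c / c * x = x / c * sin c := by ring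
    _ ≤ sin x := h

lemma Real.sin_div_mul_sq_le_sin_mul {c u : ℝ} (hc : 0 < c) (hcπ : c ≤ π) (hu : |u| ≤ c) :
    sin c / c * u ^ 2 ≤ sin u * u := by
  wlog hu₀ : 0 ≤ u generalizing u
  · simpa using this (u := -u) (by rwa [abs_neg]) (by linarith)
  have := sin_div_mul_le_sin hc hcπ hu₀ (abs_of_nonneg hu₀ ▸ hu)
  nlinarith

/- With `u = (a − b)/2` and `w = (a + b)/2`, the difference quotient of `sin` is
`cos w · sin u / u`; both factors are smallest at `S/2`, and
`cos (S/2) · sin (S/2) / (S/2) = sin S / S`. -/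
lemma Real.sin_div_mul_sq_le_sin_sub_sin_mul {S a b : ℝ} (hS : 0 < S) (hSπ : S < π)
    (hab : |a| + |b| ≤ S) :
    sin S / S * (a - b) ^ 2 ≤ (sin a - sin b) * (a - b) := by
  set u := (a - b) / 2
  set w := (a + b) / 2
  have hu : |u| ≤ S / 2 := by
    rw [abs_div, abs_two]; linarith [abs_sub a b]
  have hw : |w| ≤ S / 2 := by
    rw [abs_div, abs_two]; linarith [abs_add_le a b]
  have hsinc : sin (S / 2) / (S / 2) * u ^ 2 ≤ sin u * u :=
    sin_div_mul_sq_le_sin_mul (by positivity) (by linarith) hu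
  have hcos : cos (S / 2) ≤ cos w := by
    rw [← cos_abs w]
    exact cos_le_cos_of_nonneg_of_le_pi (abs_nonneg w) (by linarith) hw
  have hcos₀ : 0 < cos (S / 2) := cos_pos_of_mem_Ioo ⟨by linarith, by linarith⟩
  have hsinc₀ : 0 ≤ sin (S / 2) / (S / 2) * u ^ 2 :=
    mul_nonneg (div_nonneg (sin_nonneg_of_nonneg_of_le_pi (by linarith) (by linarith))
      (by linarith)) (sq_nonneg u)
  calc sin S / S * (a - b) ^ 2 = 4 * (cos (S / 2) * (sin (S / 2) / (S / 2) * u ^ 2)) := by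
        rw [show S = 2 * (S / 2) by ring, sin_two_mul]
        field_simp
        ring
    _ ≤ 4 * (cos w * (sin u * u)) := by
        gcongr ?_ * ?_
        exact mul_le_mul hcos hsinc hsinc₀ (hcos₀.le.trans hcos)
    _ = (sin a - sin b) * (a - b) := by
        rw [sin_sub_sin]
        ring

lemma neg_mul_le_of_sector {Γ a b d e G : ℝ} (hΓ : 0 < Γ) (ha : 0 < a)
    (hsec : Γ * d ^ 2 ≤ G * d) (hlip : |G| ≤ |d|) :
    -((a * d + b * e) * G) ≤ b ^ 2 / (4 * a * Γ) * e ^ 2 := by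
  have hcross : -(b * e * G) ≤ |b * e| * |d| :=
    calc -(b * e * G) ≤ |b * e * G| := neg_le_abs _
      _ ≤ |b * e| * |d| := by rw [abs_mul]; gcongr
  have hamgm : |b * e| * |d| ≤ a * Γ * d ^ 2 + b ^ 2 / (4 * a * Γ) * e ^ 2 := by
    have hsq : 0 ≤ (2 * a * Γ * |d| - |b * e|) ^ 2 / (4 * a * Γ) := by positivity
    rw [← sub_nonneg]
    convert hsq using 1
    field_simp
    rw [abs_mul, ← sq_abs d, ← sq_abs b, ← sq_abs e]
    ring
  linarith [mul_le_mul_of_nonneg_left hsec ha.le]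

section Coupling

variable {ι : Type*} [Fintype ι]

structure IsSectorCoupling (Γ : ℝ) (x : ι → ℝ) (g : ι → ι → ℝ) : Prop where
  antisymm : ∀ i j, g j i = -g i j
  sector : ∀ i j, Γ * (x j - x i) ^ 2 ≤ g i j * (x j - x i)
  abs_le : ∀ i j, |g i j| ≤ |x j - x i|

lemma sum_mul_sum_eq_of_antisymm (y : ι → ℝ) {g : ι → ι → ℝ} (hg : ∀ i j, g j i = -g i j) :
    ∑ i, y i * ∑ j, g i j = -(∑ i, ∑ j, (y j - y i) * g i j) / 2 := by
  have hswap : ∑ i, ∑ j, y j * g i j = -∑ i, ∑ j, y i * g i j := by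
    rw [sum_comm, ← sum_neg_distrib]
    exact sum_congr rfl fun j _ => by
      rw [← sum_neg_distrib]
      exact sum_congr rfl fun i _ => by rw [hg j i, mul_neg]
  simp only [mul_sum, sub_mul, sum_sub_distrib, hswap]
  ring

lemma sum_sum_sub_sq_le (v : ι → ℝ) :
    ∑ i, ∑ j, (v j - v i) ^ 2 ≤ 2 * Fintype.card ι * ∑ i, v i ^ 2 := by
  have hexpand : ∑ i, ∑ j, (v j - v i) ^ 2
      = 2 * Fintype.card ι * ∑ i, v i ^ 2 - 2 * (∑ i, v i) ^ 2 := by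
    simp only [sub_sq, sum_add_distrib, sum_sub_distrib, sum_const, card_univ, nsmul_eq_mul,
      ← mul_sum, ← sum_mul]
    ring
  nlinarith [sq_nonneg (∑ i, v i)]

lemma IsSectorCoupling.sum_mul_sum_le {Γ a b : ℝ} (hΓ : 0 < Γ) (ha : 0 < a) {x : ι → ℝ}
    {g : ι → ι → ℝ} (hg : IsSectorCoupling Γ x g) (v : ι → ℝ) :
    ∑ i, (a * x i + b * v i) * ∑ j, g i j
      ≤ b ^ 2 / (4 * a * Γ) * Fintype.card ι * ∑ i, v i ^ 2 := by
  have hpair : ∀ i j, -(((a * x j + b * v j) - (a * x i + b * v i)) * g i j)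
      ≤ b ^ 2 / (4 * a * Γ) * (v j - v i) ^ 2 := fun i j => by
    rw [show (a * x j + b * v j) - (a * x i + b * v i) = a * (x j - x i) + b * (v j - v i) by
      ring]
    exact neg_mul_le_of_sector hΓ ha (hg.sector i j) (hg.abs_le i j)
  have hsum := sum_le_sum fun i (_ : i ∈ univ) => sum_le_sum fun j (_ : j ∈ univ) => hpair i j
  simp only [sum_neg_distrib, ← mul_sum] at hsum
  rw [sum_mul_sum_eq_of_antisymm _ hg.antisymm]
  linarith [mul_le_mul_of_nonneg_left (sum_sum_sub_sq_le v)
    (by positivity : 0 ≤ b ^ 2 / (4 * a * Γ))]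

end Coupling

section Energy

variable {ι : Type*} [Fintype ι] {m γ κ Γ : ℝ}

noncomputable def inertialEnergy (m γ : ℝ) (x v : ι → ℝ) : ℝ :=
  ∑ i, (γ ^ 2 / (2 * m) * x i ^ 2 + γ * x i * v i + m * v i ^ 2)

lemma inertialEnergy_ge (hm : 0 < m) (x v : ι → ℝ) :
    γ ^ 2 / (8 * m) * ∑ i, x i ^ 2 + m / 3 * ∑ i, v i ^ 2 ≤ inertialEnergy m γ x v := by
  simp only [inertialEnergy, mul_sum, ← sum_add_distrib]
  refine sum_le_sum fun i _ => ?_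
  have hsq : 0 ≤ (3 * γ * x i + 4 * m * v i) ^ 2 / (24 * m) := by positivity
  have hgap : (3 * γ * x i + 4 * m * v i) ^ 2 / (24 * m)
      = (γ ^ 2 / (2 * m) * x i ^ 2 + γ * x i * v i + m * v i ^ 2)
        - (γ ^ 2 / (8 * m) * x i ^ 2 + m / 3 * v i ^ 2) := by
    field_simp
    ring
  linarith

lemma inertialEnergy_le (hm : 0 < m) (hγ : 0 ≤ γ) (x v : ι → ℝ) :
    inertialEnergy m γ x v ≤ (γ ^ 2 / (2 * m) + γ / 2 + m) * (∑ i, x i ^ 2 + ∑ i, v i ^ 2) := by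
  simp only [inertialEnergy, mul_add, mul_sum, ← sum_add_distrib]
  refine sum_le_sum fun i _ => ?_
  have hcross : γ * x i * v i ≤ γ / 2 * (x i ^ 2 + v i ^ 2) := by
    nlinarith [mul_nonneg hγ (sq_nonneg (x i - v i))]
  have hrest : 0 ≤ γ ^ 2 / (2 * m) * v i ^ 2 + m * x i ^ 2 := by positivity
  linarith

lemma hasDerivAt_inertialEnergy {x v a : ℝ → ι → ℝ} {t : ℝ}
    (hx : ∀ i, HasDerivAt (x · i) (v t i) t) (hv : ∀ i, HasDerivAt (v · i) (a t i) t) :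
    HasDerivAt (fun s => inertialEnergy m γ (x s) (v s))
      (∑ i, (γ ^ 2 / m * x t i * v t i + γ * v t i ^ 2
        + (γ * x t i + 2 * m * v t i) * a t i)) t := by
  refine HasDerivAt.fun_sum fun i _ => ?_
  have h := ((((hx i).pow 2).const_mul (γ ^ 2 / (2 * m))).add
    (((hx i).mul (hv i)).const_mul γ)).add (((hv i).pow 2).const_mul m)
  convert h using 1
  · ext s
    simp only [Pi.add_apply, Pi.pow_apply, Pi.mul_apply, mul_assoc]
  · field_simp
    ring

lemma inertialEnergy_rate_nonpos (hm : 0 < m) (hγ : 0 < γ) (hκ : 0 ≤ κ) (hΓ : 0 < Γ)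
    (hκm : κ * m ≤ γ ^ 2 * Γ) {x v a : ι → ℝ} {g : ι → ι → ℝ}
    (hg : IsSectorCoupling Γ x g)
    (hode : ∀ i, m * a i = -γ * v i + κ / Fintype.card ι * ∑ j, g i j) :
    ∑ i, (γ ^ 2 / m * x i * v i + γ * v i ^ 2 + (γ * x i + 2 * m * v i) * a i) ≤ 0 := by
  cases isEmpty_or_nonempty ι
  · simp
  set n : ℝ := (Fintype.card ι : ℝ)
  have hn : 0 < n := Nat.cast_pos.2 Fintype.card_pos
  have hrate : ∑ i, (γ ^ 2 / m * x i * v i + γ * v i ^ 2 + (γ * x i + 2 * m * v i) * a i)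
      = κ / (n * m) * ∑ i, (γ * x i + 2 * m * v i) * ∑ j, g i j - γ * ∑ i, v i ^ 2 := by
    rw [mul_sum, mul_sum, ← sum_sub_distrib]
    refine sum_congr rfl fun i _ => ?_
    rw [show a i = (-γ * v i + κ / n * ∑ j, g i j) / m by rw [← hode i]; field_simp]
    field_simp
    ring
  have hcoupling := hg.sum_mul_sum_le (b := 2 * m) hΓ hγ v
  have hV : 0 ≤ ∑ i, v i ^ 2 := sum_nonneg fun i _ => sq_nonneg _
  have hbound : κ / (n * m) * ((2 * m) ^ 2 / (4 * γ * Γ) * n * ∑ i, v i ^ 2)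
      ≤ γ * ∑ i, v i ^ 2 := by
    rw [show κ / (n * m) * ((2 * m) ^ 2 / (4 * γ * Γ) * n * ∑ i, v i ^ 2)
        = κ * m / (γ * Γ) * ∑ i, v i ^ 2 by field_simp; ring]
    gcongr
    rw [div_le_iff₀ (by positivity)]
    linarith
  rw [hrate]
  linarith [mul_le_mul_of_nonneg_left hcoupling (by positivity : 0 ≤ κ / (n * m))]

lemma inertialEnergy_antitoneOn (hm : 0 < m) (hγ : 0 < γ) (hκ : 0 ≤ κ) (hΓ : 0 < Γ)
    (hκm : κ * m ≤ γ ^ 2 * Γ) {x v a : ℝ → ι → ℝ} {g : ℝ → ι → ι → ℝ}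
    (hx : ∀ t i, HasDerivAt (x · i) (v t i) t) (hv : ∀ t i, HasDerivAt (v · i) (a t i) t)
    (hode : ∀ t ≥ (0 : ℝ), ∀ i, m * a t i = -γ * v t i + κ / Fintype.card ι * ∑ j, g t i j)
    (hg : ∀ t ≥ (0 : ℝ), IsSectorCoupling Γ (x t) (g t)) :
    AntitoneOn (fun t => inertialEnergy m γ (x t) (v t)) (Set.Ici 0) := by
  have hE := fun t => hasDerivAt_inertialEnergy (m := m) (γ := γ) (hx t) (hv t)
  refine antitoneOn_of_hasDerivWithinAt_nonpos (convex_Ici 0)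
    (fun t _ => (hE t).continuousAt.continuousWithinAt) (fun t _ => (hE t).hasDerivWithinAt)
    fun t ht => ?_
  rw [interior_Ici] at ht
  exact inertialEnergy_rate_nonpos hm hγ hκ hΓ hκm (hg t ht.le) (hode t ht.le)

lemma sqrt_add_sqrt_le_of_add_le {P Q P₀ Q₀ K : ℝ} (hP : 0 ≤ P) (hQ : 0 ≤ Q) (hP₀ : 0 ≤ P₀)
    (hQ₀ : 0 ≤ Q₀) (h : P + Q ≤ K * (P₀ + Q₀)) :
    √P + √Q ≤ √(2 * K) * (√P₀ + √Q₀) := by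
  have hsum : √P + √Q ≤ √(2 * (P + Q)) :=
    Real.le_sqrt_of_sq_le (by nlinarith [sq_sqrt hP, sq_sqrt hQ, sq_nonneg (√P - √Q)])
  have hsub : √(P₀ + Q₀) ≤ √P₀ + √Q₀ := by
    refine Real.sqrt_le_iff.2 ⟨by positivity, ?_⟩
    nlinarith [sq_sqrt hP₀, sq_sqrt hQ₀, sqrt_nonneg P₀, sqrt_nonneg Q₀]
  calc √P + √Q ≤ √(2 * (P + Q)) := hsum
    _ ≤ √(2 * K * (P₀ + Q₀)) := Real.sqrt_le_sqrt (by linarith)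
    _ = √(2 * K) * √(P₀ + Q₀) := Real.sqrt_mul' _ (by positivity)
    _ ≤ √(2 * K) * (√P₀ + √Q₀) := by gcongr

theorem exists_uniform_stability_of_isSectorCoupling (hm : 0 < m) (hγ : 0 < γ) (hκ : 0 ≤ κ)
    (hΓ : 0 < Γ) (hκm : κ * m ≤ γ ^ 2 * Γ) {x v a : ℝ → ι → ℝ} {g : ℝ → ι → ι → ℝ}
    (hx : ∀ t i, HasDerivAt (x · i) (v t i) t) (hv : ∀ t i, HasDerivAt (v · i) (a t i) t)
    (hode : ∀ t ≥ (0 : ℝ), ∀ i, m * a t i = -γ * v t i + κ / Fintype.card ι * ∑ j, g t i j)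
    (hg : ∀ t ≥ (0 : ℝ), IsSectorCoupling Γ (x t) (g t)) :
    ∃ C > (0 : ℝ), ∀ t ≥ (0 : ℝ), √(∑ i, x t i ^ 2) + √(∑ i, v t i ^ 2)
      ≤ C * (√(∑ i, x 0 i ^ 2) + √(∑ i, v 0 i ^ 2)) := by
  set c₀ := min (γ ^ 2 / (8 * m)) (m / 3)
  set c₁ := γ ^ 2 / (2 * m) + γ / 2 + m
  have hc₀ : 0 < c₀ := lt_min (by positivity) (by positivity)
  refine ⟨√(2 * (c₁ / c₀)), by positivity, fun t ht => ?_⟩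
  have hsq : ∀ y : ι → ℝ, 0 ≤ ∑ i, y i ^ 2 := fun y => sum_nonneg fun i _ => sq_nonneg _
  refine sqrt_add_sqrt_le_of_add_le (hsq _) (hsq _) (hsq _) (hsq _) ?_
  rw [div_mul_eq_mul_div, le_div_iff₀ hc₀]
  calc (∑ i, x t i ^ 2 + ∑ i, v t i ^ 2) * c₀
      ≤ γ ^ 2 / (8 * m) * ∑ i, x t i ^ 2 + m / 3 * ∑ i, v t i ^ 2 := by
        nlinarith [min_le_left (γ ^ 2 / (8 * m)) (m / 3), min_le_right (γ ^ 2 / (8 * m)) (m / 3),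
          hsq (x t), hsq (v t)]
    _ ≤ inertialEnergy m γ (x t) (v t) := inertialEnergy_ge hm _ _
    _ ≤ inertialEnergy m γ (x 0) (v 0) :=
        inertialEnergy_antitoneOn hm hγ hκ hΓ hκm hx hv hode hg Set.self_mem_Ici ht ht
    _ ≤ c₁ * (∑ i, x 0 i ^ 2 + ∑ i, v 0 i ^ 2) := inertialEnergy_le hm hγ.le _ _

end Energy

lemma abs_sub_le_phaseDiam {N : ℕ} (Θ : Fin N → ℝ) (i j : Fin N) :
    |Θ i - Θ j| ≤ phaseDiam Θ := by
  have hbdd : BddAbove (Set.range fun p : Fin N × Fin N => Θ p.1 - Θ p.2) :=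
    (Set.finite_range _).bddAbove
  exact abs_sub_le_iff.2 ⟨le_ciSup hbdd (i, j), le_ciSup hbdd (j, i)⟩

lemma isSectorCoupling_sin_sub {N : ℕ} {S : ℝ} (hS : 0 < S) (hSπ : S < π) {θ θ' : Fin N → ℝ}
    (hD : phaseDiam θ + phaseDiam θ' ≤ S) :
    IsSectorCoupling (sin S / S) (θ - θ') fun i j => sin (θ j - θ i) - sin (θ' j - θ' i) where
  antisymm i j := by
    rw [← neg_sub (θ i), ← neg_sub (θ' i), sin_neg, sin_neg]
    ring
  sector i j := by
    have hab : |θ j - θ i| + |θ' j - θ' i| ≤ S := by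
      linarith [abs_sub_le_phaseDiam θ j i, abs_sub_le_phaseDiam θ' j i]
    convert sin_div_mul_sq_le_sin_sub_sin_mul hS hSπ hab using 2 <;> simp only [Pi.sub_apply] <;>
      ring
  abs_le i j := by
    simpa only [Pi.sub_apply, sub_sub_sub_comm] using abs_sin_sub_sin_le _ _

theorem kuramoto_inertia_uniform_stability_general
    (N : ℕ)
    (m γ κ : ℝ) (hm : 0 < m) (hγpos : 0 < γ) (hκ : 0 < κ)
    (θ θt : ℝ → Fin N → ℝ)
    (hreg : ∀ i, ContDiff ℝ 2 (fun t => θ t i))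
    (hregt : ∀ i, ContDiff ℝ 2 (fun t => θt t i))
    (hode : ∀ t ≥ (0:ℝ), ∀ i,
      m * deriv (deriv (fun s => θ s i)) t
        = -γ * deriv (fun s => θ s i) t
          + (κ / N) * ∑ j, Real.sin (θ t j - θ t i))
    (hodet : ∀ t ≥ (0:ℝ), ∀ i,
      m * deriv (deriv (fun s => θt s i)) t
        = -γ * deriv (fun s => θt s i) t
          + (κ / N) * ∑ j, Real.sin (θt t j - θt t i))
    (S : ℝ) (hS0 : 0 < S) (hSπ : S < Real.pi)
    (hD : ∀ t ≥ (0:ℝ), phaseDiam (θ t) + phaseDiam (θt t) ≤ S)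
    (Γt : ℝ) (hΓt : Γt = Real.sin S / S)
    (hint : κ / (2 * Γt) ≤ (2 * γ - 1) / (2 * m))
    (X V : ℝ → Fin N → ℝ)
    (hX : X = fun t i => θ t i - θt t i)
    (hV : V = fun t i =>
      deriv (fun s => θ s i) t - deriv (fun s => θt s i) t) :
    ∃ C > (0:ℝ), ∀ t ≥ (0:ℝ),
      Real.sqrt (∑ i, (X t i) ^ 2) + Real.sqrt (∑ i, (V t i) ^ 2)
        ≤ C * (Real.sqrt (∑ i, (X 0 i) ^ 2)
          + Real.sqrt (∑ i, (V 0 i) ^ 2)) := by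
  subst hX hV hΓt
  have hΓ : 0 < sin S / S := div_pos (sin_pos_of_pos_of_lt_pi hS0 hSπ) hS0
  have hκm : κ * m ≤ γ ^ 2 * (sin S / S) := by
    rw [div_le_div_iff₀ (by positivity) (by positivity)] at hint
    nlinarith [sq_nonneg (γ - 1)]
  have hx : ∀ t i, HasDerivAt (fun s => θ s i - θt s i)
      (deriv (θ · i) t - deriv (θt · i) t) t := fun t i =>
    ((hreg i).differentiable (by norm_num) t).hasDerivAt.sub
      ((hregt i).differentiable (by norm_num) t).hasDerivAt
  have hv : ∀ t i, HasDerivAt (fun s => deriv (θ · i) s - deriv (θt · i) s)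
      (deriv (deriv (θ · i)) t - deriv (deriv (θt · i)) t) t := fun t i =>
    ((hreg i).differentiable_deriv_two t).hasDerivAt.sub
      ((hregt i).differentiable_deriv_two t).hasDerivAt
  refine exists_uniform_stability_of_isSectorCoupling hm hγpos hκ.le hΓ hκm hx hv
    (fun t ht i => ?_) fun t ht => isSectorCoupling_sin_sub hS0 hSπ (hD t ht)
  rw [Fintype.card_fin, sum_sub_distrib]
  linear_combination hode t ht i - hodet t ht i

/-- Uniform-in-time ℓ²-stability of the inertial Kuramoto flow
for identical oscillators with all-to-all coupling: there is a constant
`C > 0`, independent of time, such that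
`‖Θ(t) − Θ̃(t)‖ + ‖Ω(t) − Ω̃(t)‖ ≤ C·(‖Θ(0) − Θ̃(0)‖ + ‖Ω(0) − Ω̃(0)‖)`
for all `t ≥ 0`. -/
theorem kuramoto_inertia_uniform_stability
    (N : ℕ) (hN : 1 ≤ N)
    (m γ κ : ℝ) (hm : 0 < m) (hγpos : 0 < γ) (hκ : 0 < κ)
    (θ θt : ℝ → Fin N → ℝ)
    (hreg : ∀ i, ContDiff ℝ 2 (fun t => θ t i))
    (hregt : ∀ i, ContDiff ℝ 2 (fun t => θt t i))
    (hode : ∀ t ≥ (0:ℝ), ∀ i,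
      m * deriv (deriv (fun s => θ s i)) t
        = -γ * deriv (fun s => θ s i) t
          + (κ / N) * ∑ j, Real.sin (θ t j - θ t i))
    (hodet : ∀ t ≥ (0:ℝ), ∀ i,
      m * deriv (deriv (fun s => θt s i)) t
        = -γ * deriv (fun s => θt s i) t
          + (κ / N) * ∑ j, Real.sin (θt t j - θt t i))
    (hθ0 : ∑ i, θ 0 i = 0) (hθt0 : ∑ i, θt 0 i = 0)
    (hω0 : ∑ i, deriv (fun s => θ s i) 0 = 0)
    (hωt0 : ∑ i, deriv (fun s => θt s i) 0 = 0)
    (hγ : 1 / 2 < γ)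
    (S : ℝ) (hS0 : 0 < S) (hSπ : S < Real.pi)
    (hD : ∀ t ≥ (0:ℝ), phaseDiam (θ t) + phaseDiam (θt t) ≤ S)
    (Γt : ℝ) (hΓt : Γt = Real.sin S / S)
    (hint : κ / (2 * Γt) ≤ (2 * γ - 1) / (2 * m))
    (X V : ℝ → Fin N → ℝ)
    (hX : X = fun t i => θ t i - θt t i)
    (hV : V = fun t i =>
      deriv (fun s => θ s i) t - deriv (fun s => θt s i) t) :
    ∃ C > (0:ℝ), ∀ t ≥ (0:ℝ),
      Real.sqrt (∑ i, (X t i) ^ 2) + Real.sqrt (∑ i, (V t i) ^ 2)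
        ≤ C * (Real.sqrt (∑ i, (X 0 i) ^ 2)
          + Real.sqrt (∑ i, (V 0 i) ^ 2)) :=
  kuramoto_inertia_uniform_stability_general N m γ κ hm hγpos hκ θ θt hreg hregt hode hodet S hS0
    hSπ hD Γt hΓt hint X V hX hV
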